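/- arXiv:1503.03776 — 6 statements merged into one kernel-verified Lean document; each statement's English description precedes it below -/
import Mathlib

section
/- For all integers n ≥ 0, Σ_{k=0}^{n} F(n,k) = 1, where F(n,k) = (1/(3n+1)) · ((2n+1)!/(n!)^2) · C(n,k)/C(3n, n+k). -/
open Finset Nat

lemma auxT (m : ℕ) : ∀ a b : ℕ,
    ∑ i ∈ Finset.range (m+1), (i.choose a) * ((m-i).choose b) = (m+1).choose (a+b+1) := by
  induction m with
  | zero =>
    intro a b
    cases a <;> cases b <;> simp [Nat.choose]
  | succ m ih =>
    intro a b
    rw [Finset.sum_range_succ']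
    have hsub : ∀ i : ℕ, m + 1 - (i+1) = m - i := fun i => by omega
    simp only [hsub, Nat.sub_zero]
    cases a with
    | zero =>
      have h1 := ih 0 b
      simp only [Nat.choose_zero_right, one_mul, Nat.zero_add] at h1 ⊢
      rw [h1, Nat.choose_succ_succ' (m+1) b]
      omega
    | succ a =>
      simp only [Nat.choose_zero_succ, zero_mul, add_zero]
      have hterm : ∑ x ∈ Finset.range (m+1), (x+1).choose (a+1) * ((m-x).choose b)
          = ∑ x ∈ Finset.range (m+1),
              (x.choose a * ((m-x).choose b) + x.choose (a+1) * ((m-x).choose b)) :=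
        Finset.sum_congr rfl (fun x _ => by rw [Nat.choose_succ_succ, add_mul])
      rw [hterm, Finset.sum_add_distrib, ih a b, ih (a+1) b]
      have h4 : a+1+b+1 = (a+b+1)+1 := by omega
      rw [h4, Nat.choose_succ_succ' (m+1) (a+b+1)]

lemma auxSum (n : ℕ) :
    ∑ k ∈ Finset.range (n+1), (n+k).choose n * (2*n-k).choose n = (3*n+1).choose n := by
  have hT := auxT (3*n) n n
  have hmid : ∑ i ∈ Finset.Ico n (2*n+1), (i.choose n) * ((3*n-i).choose n)
      = ∑ k ∈ Finset.range (n+1), (n+k).choose n * (2*n-k).choose n := by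
    rw [Finset.sum_Ico_eq_sum_range]
    have : 2*n+1-n = n+1 := by omega
    rw [this]
    apply Finset.sum_congr rfl
    intro k hk
    simp only [Finset.mem_range] at hk
    congr 2
    omega
  have hsplit : ∑ i ∈ Finset.range (3*n+1), (i.choose n) * ((3*n-i).choose n)
      = ∑ i ∈ Finset.Ico n (2*n+1), (i.choose n) * ((3*n-i).choose n) := by
    rw [Finset.range_eq_Ico, ← Finset.sum_Ico_consecutive _ (by omega : 0 ≤ n) (by omega : n ≤ 3*n+1),
      ← Finset.sum_Ico_consecutive _ (by omega : n ≤ 2*n+1) (by omega : 2*n+1 ≤ 3*n+1)]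
    have h1 : ∑ i ∈ Finset.Ico 0 n, (i.choose n) * ((3*n-i).choose n) = 0 := by
      apply Finset.sum_eq_zero
      intro i hi
      simp only [Finset.mem_Ico] at hi
      rw [Nat.choose_eq_zero_of_lt hi.2, zero_mul]
    have h2 : ∑ i ∈ Finset.Ico (2*n+1) (3*n+1), (i.choose n) * ((3*n-i).choose n) = 0 := by
      apply Finset.sum_eq_zero
      intro i hi
      simp only [Finset.mem_Ico] at hi
      rw [Nat.choose_eq_zero_of_lt (by omega : 3*n-i < n), mul_zero]
    omega
  rw [← hmid, ← hsplit, hT]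
  have h3 : n + n + 1 = 2*n+1 := by omega
  rw [h3]
  have := Nat.choose_symm (by omega : 2*n+1 ≤ 3*n+1)
  have h4 : 3*n+1 - (2*n+1) = n := by omega
  rw [h4] at this
  omega

theorem sum_F_eq_one (n : ℕ) :
    ∑ k ∈ Finset.range (n+1),
      (1 / (3*(n:ℚ)+1)) * (((2*n+1)! : ℚ) / ((n ! : ℚ))^2) *
        ((n.choose k : ℚ) / ((3*n).choose (n+k) : ℚ)) = 1 := by
  have hC : (0:ℚ) < ((3*n+1).choose n : ℚ) := by
    exact_mod_cast Nat.choose_pos (by omega : n ≤ 3*n+1)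
  have key : ∀ k ∈ Finset.range (n+1),
      (1 / (3*(n:ℚ)+1)) * (((2*n+1)! : ℚ) / ((n ! : ℚ))^2) *
        ((n.choose k : ℚ) / ((3*n).choose (n+k) : ℚ))
      = (((n+k).choose n * (2*n-k).choose n : ℕ) : ℚ) / (((3*n+1).choose n : ℕ) : ℚ) := by
    intro k hk
    simp only [Finset.mem_range] at hk
    have hkn : k ≤ n := by omega
    rw [Nat.cast_choose ℚ hkn, Nat.cast_choose ℚ (by omega : n+k ≤ 3*n),
      Nat.cast_choose ℚ (by omega : n ≤ 3*n+1)]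
    push_cast
    rw [Nat.cast_choose ℚ (by omega : n ≤ n+k), Nat.cast_choose ℚ (by omega : n ≤ 2*n-k)]
    have e1 : n - k + k = n := by omega
    have e2 : 3*n - (n+k) = 2*n - k := by omega
    have e3 : n + k - n = k := by omega
    have e4 : 2*n - k - n = n - k := by omega
    have e5 : 3*n + 1 - n = 2*n + 1 := by omega
    rw [e2, e3, e4, e5]
    have f1 : ((n)! : ℚ) ≠ 0 := by exact_mod_cast Nat.factorial_ne_zero n
    have f2 : ((k)! : ℚ) ≠ 0 := by exact_mod_cast Nat.factorial_ne_zero k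
    have f3 : (((n-k))! : ℚ) ≠ 0 := by exact_mod_cast Nat.factorial_ne_zero (n-k)
    have f4 : (((n+k))! : ℚ) ≠ 0 := by exact_mod_cast Nat.factorial_ne_zero (n+k)
    have f5 : (((2*n-k))! : ℚ) ≠ 0 := by exact_mod_cast Nat.factorial_ne_zero (2*n-k)
    have f6 : (((3*n))! : ℚ) ≠ 0 := by exact_mod_cast Nat.factorial_ne_zero (3*n)
    have f7 : (((2*n+1))! : ℚ) ≠ 0 := by exact_mod_cast Nat.factorial_ne_zero (2*n+1)
    have f8 : (3*(n:ℚ)+1) ≠ 0 := by positivity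
    have f9 : (((3*n+1))! : ℚ) = (3*(n:ℚ)+1) * ((3*n)! : ℚ) := by
      have : (3*n+1)! = (3*n+1) * (3*n)! := Nat.factorial_succ (3*n)
      rw [this]
      push_cast
      ring
    rw [f9]
    field_simp
  rw [Finset.sum_congr rfl key, ← Finset.sum_div, ← Nat.cast_sum, auxSum]
  exact div_self (ne_of_gt hC)
end

section
/- For all positive integers n and all integers m with 0 ≤ m ≤ 2n - 1, the binomial summation identity Σ_{j=0}^{n} (-1)^{n+j} · C(n,j) · C(3n, m+j-n) / C(3n, n+j) = Σ_{j=0}^{n} C(n,j) · C(n+j-1, m+j-n) / C(3n, n+j) holds. -/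
open Finset Nat

/-- Binomial coefficient `C(a,b)` for integers, with the convention that it
vanishes when `b < 0` or `b > a`. -/
def intChoose (a b : ℤ) : ℚ :=
  if 0 ≤ b ∧ b ≤ a then ((a.toNat.choose b.toNat : ℕ) : ℚ) else 0

noncomputable section

open Polynomial

abbrev R := Polynomial ℚ
abbrev S := Polynomial R

/-- Formal integration over `[0,y]` of a polynomial (in an outer variable) -/
def Fv (p : S) (y : R) : R :=
  p.sum fun k c => Polynomial.C (((k : ℚ) + 1)⁻¹) * (c * y ^ (k + 1))

lemma Fv_zero (y : R) : Fv 0 y = 0 := Polynomial.sum_zero_index _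

lemma Fv_add (p q : S) (y : R) : Fv (p + q) y = Fv p y + Fv q y := by
  unfold Fv
  apply Polynomial.sum_add_index <;> intros <;> ring

lemma Fv_C_mul (c : R) (p : S) (y : R) : Fv (Polynomial.C c * p) y = c * Fv p y := by
  unfold Fv
  rw [← Polynomial.smul_eq_C_mul, Polynomial.sum_smul_index _ _ _ (by intro i; ring)]
  rw [Polynomial.sum_def, Polynomial.sum_def, Finset.mul_sum]
  exact Finset.sum_congr rfl fun k _ => by ring

lemma Fv_monomial (k : ℕ) (c : R) (y : R) :
    Fv (Polynomial.monomial k c) y = Polynomial.C (((k : ℚ) + 1)⁻¹) * (c * y ^ (k + 1)) :=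
  Polynomial.sum_monomial_index _ _ (by ring)

lemma Fv_sum {ι : Type*} (s : Finset ι) (p : ι → S) (y : R) :
    Fv (∑ j ∈ s, p j) y = ∑ j ∈ s, Fv (p j) y := by
  classical
  induction s using Finset.induction_on with
  | empty => simp [Fv_zero]
  | insert _ _ h ih => rw [Finset.sum_insert h, Finset.sum_insert h, Fv_add, ih]

lemma Fv_neg (p : S) (y : R) : Fv (-p) y = -Fv p y := by
  have h := Fv_C_mul (-1) p y
  rw [show (Polynomial.C (-1 : R)) * p = -p by rw [map_neg, map_one]; ring] at h
  rw [h]; ring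

lemma Fv_sub (p q : S) (y : R) : Fv (p - q) y = Fv p y - Fv q y := by
  rw [sub_eq_add_neg, Fv_add, Fv_neg, sub_eq_add_neg]

lemma Fv_at_zero (p : S) : Fv p 0 = 0 := by
  unfold Fv
  rw [Polynomial.sum_def]
  apply Finset.sum_eq_zero
  intro k _
  rw [zero_pow (Nat.succ_ne_zero k)]
  ring

lemma choose_inv_succ (k i : ℕ) :
    ((i:ℚ)+1)⁻¹ * (k.choose i : ℚ) = ((k:ℚ)+1)⁻¹ * ((k+1).choose (i+1) : ℚ) := by
  have h := Nat.add_one_mul_choose_eq k i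
  have h' : ((k:ℚ)+1) * (k.choose i : ℚ) = ((k+1).choose (i+1) : ℚ) * ((i:ℚ)+1) := by
    exact_mod_cast congrArg (Nat.cast : ℕ → ℚ) h
  have hi : ((i:ℚ)+1) ≠ 0 := by positivity
  have hk : ((k:ℚ)+1) ≠ 0 := by positivity
  field_simp
  linarith [h']

/-- key scalar identity : a * ∑ C(k,i)/(i+1) a^i b^(k-i) = ((a+b)^(k+1) - b^(k+1))/(k+1) -/
lemma key_scalar (k : ℕ) (a b : R) :
    a * ∑ i ∈ range (k+1), Polynomial.C (((i:ℚ)+1)⁻¹) * (k.choose i : R) * (a^i * b^(k-i)) =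
      Polynomial.C (((k:ℚ)+1)⁻¹) * ((a+b)^(k+1) - b^(k+1)) := by
  have expand : (a+b)^(k+1) = ∑ l ∈ range (k+2), a^l * b^(k+1-l) * ((k+1).choose l : ℚ[X]) :=
    add_pow a b (k+1)
  have expand' : (a+b)^(k+1) =
      (∑ i ∈ range (k+1), a^(i+1) * b^(k+1-(i+1)) * ((k+1).choose (i+1) : ℚ[X]))
        + a^0 * b^(k+1-0) * ((k+1).choose 0 : ℚ[X]) := by
    rw [expand]; exact Finset.sum_range_succ' _ (k+1)
  have hb : (a+b)^(k+1) - b^(k+1) =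
      ∑ i ∈ range (k+1), a^(i+1) * b^(k-i) * ((k+1).choose (i+1) : ℚ[X]) := by
    rw [expand']; simp only [pow_zero, one_mul, Nat.choose_zero_right, Nat.cast_one, mul_one,
      Nat.add_sub_cancel, Nat.sub_zero]
    rw [add_sub_cancel_right]
    apply Finset.sum_congr rfl
    intro i hi
    have hsub : k+1-(i+1) = k-i := by omega
    rw [hsub]
  rw [hb, Finset.mul_sum, Finset.mul_sum]
  apply Finset.sum_congr rfl
  intro i hi
  have hci : Polynomial.C (((i:ℚ)+1)⁻¹) * (k.choose i : R)
      = Polynomial.C (((k:ℚ)+1)⁻¹) * ((k+1).choose (i+1) : R) := by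
    have h := congrArg Polynomial.C (choose_inv_succ k i)
    simpa [map_mul, Polynomial.C_eq_natCast] using h
  rw [hci]
  ring

/-- Change of variables for the formal integral. -/
lemma Fv_comp_linear (p : S) (a b : R) :
    a * Fv (p.comp (Polynomial.C a * Polynomial.X + Polynomial.C b)) 1 =
      Fv p (a+b) - Fv p b := by
  induction p using Polynomial.induction_on' with
  | add p q hp hq =>
      rw [add_comp, Fv_add, Fv_add, Fv_add, mul_add, hp, hq]; ring
  | monomial k c =>
      rw [monomial_comp, Fv_C_mul]
      simp only [Fv_monomial]
      have hexp : (Polynomial.C a * Polynomial.X + Polynomial.C b)^k =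
          ∑ i ∈ range (k+1),
            Polynomial.monomial i ((k.choose i : R) * (a^i * b^(k-i))) := by
        rw [add_pow]
        apply Finset.sum_congr rfl
        intro i hi
        rw [mul_pow, ← map_pow, ← map_pow, ← Polynomial.C_mul_X_pow_eq_monomial]
        simp [Polynomial.C_eq_natCast]
        ring
      rw [hexp, Fv_sum]
      have hterm : ∀ i ∈ range (k+1),
          Fv (Polynomial.monomial i ((k.choose i : R) * (a^i * b^(k-i)))) 1
            = Polynomial.C (((i:ℚ)+1)⁻¹) * (k.choose i : R) * (a^i * b^(k-i)) := by
        intro i hi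
        rw [Fv_monomial, one_pow]
        ring
      rw [Finset.sum_congr rfl hterm]
      have hks := key_scalar k a b
      calc a * (c * ∑ i ∈ range (k+1),
              Polynomial.C (((i:ℚ)+1)⁻¹) * (k.choose i : R) * (a^i * b^(k-i)))
          = c * (a * ∑ i ∈ range (k+1),
              Polynomial.C (((i:ℚ)+1)⁻¹) * (k.choose i : R) * (a^i * b^(k-i))) := by ring
        _ = c * (Polynomial.C (((k:ℚ)+1)⁻¹) * ((a+b)^(k+1) - b^(k+1))) := by rw [hks]
        _ = Polynomial.C (((k:ℚ)+1)⁻¹) * (c * (a+b)^(k+1)) -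
              Polynomial.C (((k:ℚ)+1)⁻¹) * (c * b^(k+1)) := by ring

/-- Beta values -/
def Bq (a b : ℕ) : ℚ := (a)! * (b)! / ((a+b+1)!)

lemma Bq_succ (a b : ℕ) : Bq a (b+1) = Bq a b - Bq (a+1) b := by
  unfold Bq
  have h1 : (a+(b+1)+1)! = ((a+b+2):ℕ) * (a+b+1)! := by
    rw [show a+(b+1)+1 = (a+b+1)+1 by ring, Nat.factorial_succ]
  have h2 : ((a+1)+b+1)! = ((a+b+2):ℕ) * (a+b+1)! := by
    rw [show (a+1)+b+1 = (a+b+1)+1 by ring, Nat.factorial_succ]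
  rw [h1, h2]
  have h3 : ((b+1):ℕ)! = (b+1) * (b)! := Nat.factorial_succ b
  have h4 : ((a+1):ℕ)! = (a+1) * (a)! := Nat.factorial_succ a
  rw [h3, h4]
  have hf1 : ((a+b+1)! : ℚ) ≠ 0 := by exact_mod_cast (Nat.factorial_pos _).ne'
  have hf2 : ((a+b+2 : ℕ) : ℚ) ≠ 0 := by positivity
  push_cast
  field_simp
  ring

lemma betaVal (a b : ℕ) :
    Fv ((Polynomial.X : S)^a * (1 - Polynomial.X)^b) 1 = Polynomial.C (Bq a b) := by
  induction b generalizing a with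
  | zero =>
      rw [pow_zero, mul_one, Polynomial.X_pow_eq_monomial, Fv_monomial]
      have : Bq a 0 = ((a:ℚ)+1)⁻¹ := by
        unfold Bq
        rw [Nat.factorial_zero, show a+0+1 = a+1 by ring, Nat.factorial_succ]
        have : ((a)! : ℚ) ≠ 0 := by exact_mod_cast (Nat.factorial_pos _).ne'
        push_cast
        field_simp
      rw [this]
      simp
  | succ b ih =>
      have hsplit : (Polynomial.X : S)^a * (1 - Polynomial.X)^(b+1)
          = (Polynomial.X : S)^a * (1 - Polynomial.X)^b
            - (Polynomial.X : S)^(a+1) * (1 - Polynomial.X)^b := by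
        ring
      rw [hsplit, Fv_sub, ih, ih, ← map_sub]
      congr 1
      rw [Bq_succ]

/-! ### Main development -/

def xq : R := Polynomial.X

def hp (n : ℕ) : S :=
  Polynomial.X^n * (1 - Polynomial.X)^n * (Polynomial.C xq + Polynomial.X)^n

lemma hp_expand (n : ℕ) : hp n = ∑ j ∈ range (n+1),
    Polynomial.C ((n.choose j : R) * (1+xq)^j * xq^(n-j)) *
      (Polynomial.X^(n+j) * (1-Polynomial.X)^(2*n-j)) := by
  have key : (Polynomial.C xq + Polynomial.X : S) =
      Polynomial.C (1+xq) * Polynomial.X + Polynomial.C xq * (1 - Polynomial.X) := by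
    rw [map_add, map_one]; ring
  have hu : (Polynomial.C (1+xq) * Polynomial.X + Polynomial.C xq * (1 - Polynomial.X) : S)^n
      = ∑ j ∈ range (n+1), (Polynomial.C (1+xq) * Polynomial.X)^j
          * (Polynomial.C xq * (1-Polynomial.X))^(n-j) * (n.choose j : S) := add_pow _ _ n
  rw [hp, key, hu, Finset.mul_sum]
  apply Finset.sum_congr rfl
  intro j hj
  have hj' : j ≤ n := by simpa using Nat.lt_succ_iff.mp (Finset.mem_range.mp hj)
  have e1 : n + (n-j) = 2*n - j := by omega
  rw [mul_pow, mul_pow, ← map_pow, ← map_pow,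
    show (n.choose j : S) = Polynomial.C ((n.choose j : R)) by simp,
    ← e1, pow_add, pow_add, map_mul, map_mul]
  ring

lemma hp_comp1 (n : ℕ) : (hp n).comp (Polynomial.C (1+xq) * Polynomial.X + Polynomial.C (-xq))
    = ∑ j ∈ range (n+1),
        Polynomial.C ((n.choose j : R) * (-xq)^(n-j) * (1+xq)^(2*n)) *
          (Polynomial.X^(n+j) * (1-Polynomial.X)^(2*n-j)) := by
  have hcomp : (hp n).comp (Polynomial.C (1+xq) * Polynomial.X + Polynomial.C (-xq))
      = Polynomial.C ((1+xq)^(2*n)) *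
          (Polynomial.X^n * (1-Polynomial.X)^n *
            (Polynomial.X + Polynomial.C (-xq) * (1 - Polynomial.X))^n) := by
    rw [hp]
    simp only [mul_comp, pow_comp, sub_comp, add_comp, one_comp, C_comp, X_comp]
    have e2 : (1 : S) - (Polynomial.C (1+xq) * Polynomial.X + Polynomial.C (-xq))
        = Polynomial.C (1+xq) * (1 - Polynomial.X) := by
      rw [map_add, map_one, map_neg]; ring
    have e3 : Polynomial.C xq + (Polynomial.C (1+xq) * Polynomial.X + Polynomial.C (-xq))
        = Polynomial.C (1+xq) * Polynomial.X := by
      rw [map_add, map_one, map_neg]; ring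
    have e4 : (Polynomial.C (1+xq) * Polynomial.X + Polynomial.C (-xq) : S)
        = Polynomial.X + Polynomial.C (-xq) * (1 - Polynomial.X) := by
      rw [map_add, map_one, map_neg]; ring
    rw [e2, e3, e4, mul_pow, mul_pow, ← map_pow,
      show 2*n = n+n by ring, pow_add, map_mul]
    ring
  have hu : (Polynomial.X + Polynomial.C (-xq) * (1 - Polynomial.X) : S)^n
      = ∑ j ∈ range (n+1), Polynomial.X^j * (Polynomial.C (-xq) * (1-Polynomial.X))^(n-j)
          * (n.choose j : S) := add_pow _ _ n
  rw [hcomp, hu, Finset.mul_sum, Finset.mul_sum]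
  apply Finset.sum_congr rfl
  intro j hj
  have hj' : j ≤ n := by simpa using Nat.lt_succ_iff.mp (Finset.mem_range.mp hj)
  have e1 : n + (n-j) = 2*n - j := by omega
  rw [mul_pow, ← map_pow,
    show (n.choose j : S) = Polynomial.C ((n.choose j : R)) by simp,
    ← e1, pow_add, pow_add, map_mul, map_mul]
  ring

lemma hp_comp2 (n : ℕ) : (hp n).comp (Polynomial.C (-xq) * Polynomial.X + Polynomial.C 0)
    = Polynomial.C ((-xq)^n * xq^n) *
        (Polynomial.X^n * (1 - Polynomial.X)^n * (1 + Polynomial.C xq * Polynomial.X)^n) := by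
  rw [hp]
  simp only [mul_comp, pow_comp, sub_comp, add_comp, one_comp, C_comp, X_comp, map_zero, add_zero]
  have e2 : (1 : S) - Polynomial.C (-xq) * Polynomial.X
      = 1 + Polynomial.C xq * Polynomial.X := by
    rw [map_neg]; ring
  have e3 : Polynomial.C xq + Polynomial.C (-xq) * Polynomial.X
      = Polynomial.C xq * (1 - Polynomial.X) := by
    rw [map_neg]; ring
  rw [e2, e3, mul_pow, mul_pow, ← map_pow, ← map_pow, map_mul]
  ring

/-- coefficients below `K` of `D` vanish when `(1+X) * D = X^K * W` -/
lemma coeff_zero_of_shift (D W : R) (K : ℕ)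
    (h : (1 + Polynomial.X) * D = Polynomial.X^K * W) :
    ∀ i, i < K → D.coeff i = 0 := by
  intro i
  induction i with
  | zero =>
      intro hi
      have h0 : ((1 + Polynomial.X) * D).coeff 0 = (Polynomial.X^K * W).coeff 0 := by rw [h]
      rw [Polynomial.coeff_X_pow_mul', if_neg (by omega)] at h0
      simpa [Polynomial.mul_coeff_zero] using h0
  | succ i ih =>
      intro hi
      have hI := ih (by omega)
      have h0 : ((1 + Polynomial.X) * D).coeff (i+1) = (Polynomial.X^K * W).coeff (i+1) := by
        rw [h]
      rw [Polynomial.coeff_X_pow_mul', if_neg (by omega)] at h0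
      rw [add_mul, one_mul] at h0
      rw [Polynomial.coeff_add, Polynomial.coeff_X_mul, hI] at h0
      simpa using h0

lemma key_div (n : ℕ) (hn : 1 ≤ n) :
    ∃ W : R, (1 + xq) *
      ((1+xq)^n * Fv ((hp n).comp (Polynomial.C (1+xq) * Polynomial.X + Polynomial.C (-xq))) 1
        - (1+xq)^(n-1) * Fv (hp n) 1)
      = xq^(2*n+1) * W := by
  set W0 : R :=
    Fv (Polynomial.X^n * (1 - Polynomial.X)^n * (1 + Polynomial.C xq * Polynomial.X)^n) 1 with hW0
  refine ⟨(-1:R)^n * (1+xq)^n * W0, ?_⟩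
  have e1 := Fv_comp_linear (hp n) (1+xq) (-xq)
  rw [show (1+xq) + (-xq) = 1 by ring] at e1
  have e2 := Fv_comp_linear (hp n) (-xq) 0
  rw [add_zero, Fv_at_zero, sub_zero] at e2
  rw [hp_comp2, Fv_C_mul, ← hW0] at e2
  have hpow : (1+xq) * (1+xq)^(n-1) = (1+xq)^n := by
    have h' : n - 1 + 1 = n := by omega
    conv_rhs => rw [← h']
    rw [pow_succ]
    ring
  calc (1+xq) *
      ((1+xq)^n * Fv ((hp n).comp (Polynomial.C (1+xq) * Polynomial.X + Polynomial.C (-xq))) 1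
        - (1+xq)^(n-1) * Fv (hp n) 1)
      = (1+xq)^n *
          ((1+xq) * Fv ((hp n).comp (Polynomial.C (1+xq) * Polynomial.X + Polynomial.C (-xq))) 1)
        - ((1+xq) * (1+xq)^(n-1)) * Fv (hp n) 1 := by ring
    _ = (1+xq)^n * (Fv (hp n) 1 - Fv (hp n) (-xq)) - (1+xq)^n * Fv (hp n) 1 := by rw [e1, hpow]
    _ = -((1+xq)^n * Fv (hp n) (-xq)) := by ring
    _ = -((1+xq)^n * (-xq * ((-xq)^n * xq^n * W0))) := by rw [← e2]
    _ = xq^(2*n+1) * ((-1:R)^n * (1+xq)^n * W0) := by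
        rw [neg_pow, show 2*n+1 = n+n+1 by ring, pow_add, pow_add, pow_one]
        ring

lemma Fv_hp (n : ℕ) : Fv (hp n) 1 = ∑ j ∈ range (n+1),
    ((n.choose j : R) * (1+xq)^j * xq^(n-j)) * Polynomial.C (Bq (n+j) (2*n-j)) := by
  rw [hp_expand, Fv_sum]
  apply Finset.sum_congr rfl
  intro j hj
  rw [Fv_C_mul, betaVal]

lemma Fv_hpc (n : ℕ) :
    Fv ((hp n).comp (Polynomial.C (1+xq) * Polynomial.X + Polynomial.C (-xq))) 1
      = ∑ j ∈ range (n+1),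
        ((n.choose j : R) * (-xq)^(n-j) * (1+xq)^(2*n)) * Polynomial.C (Bq (n+j) (2*n-j)) := by
  rw [hp_comp1, Fv_sum]
  apply Finset.sum_congr rfl
  intro j hj
  rw [Fv_C_mul, betaVal]

lemma coeff_pow_aux (d N mm : ℕ) :
    ((xq^d * (1+xq)^N : R)).coeff mm = if d ≤ mm then (N.choose (mm-d) : ℚ) else 0 := by
  show ((Polynomial.X^d * (1+Polynomial.X)^N : R)).coeff mm = _
  rw [Polynomial.coeff_X_pow_mul']
  split_ifs with h
  · rw [Polynomial.coeff_one_add_X_pow]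
  · rfl

lemma neg_one_pow_eq (n j : ℕ) (hj : j ≤ n) : ((-1:ℚ))^(n+j) = (-1)^(n-j) := by
  rw [show n+j = (n-j) + 2*j by omega, pow_add, pow_mul]
  simp

lemma Bq_inv (n j : ℕ) (hj : j ≤ n) (hn : 1 ≤ n) :
    (((3*n).choose (n+j) : ℚ))⁻¹ = (3*(n:ℚ)+1) * Bq (n+j) (2*n-j) := by
  have hle : n+j ≤ 3*n := by omega
  have hfact := Nat.choose_mul_factorial_mul_factorial hle
  rw [show 3*n - (n+j) = 2*n-j by omega] at hfact
  have hfactQ : ((3*n).choose (n+j) : ℚ) * ((n+j)! : ℚ) * ((2*n-j)! : ℚ) = ((3*n)! : ℚ) := by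
    exact_mod_cast congrArg (Nat.cast : ℕ → ℚ) hfact
  unfold Bq
  rw [show (n+j) + (2*n-j) + 1 = 3*n+1 by omega, Nat.factorial_succ]
  have c0 : ((3*n).choose (n+j) : ℚ) ≠ 0 := by
    exact_mod_cast (Nat.choose_pos hle).ne'
  have f1 : (((3*n)!) : ℚ) ≠ 0 := by exact_mod_cast (Nat.factorial_pos _).ne'
  have f4 : ((3*(n:ℚ))+1) ≠ 0 := by positivity
  have hcast : ((3*n+1 : ℕ) : ℚ) = 3*(n:ℚ)+1 := by push_cast; ring
  rw [Nat.cast_mul, hcast]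
  have hsimp : (3*(n:ℚ)+1) * (((n+j)! : ℚ) * ((2*n-j)! : ℚ) / ((3*(n:ℚ)+1) * ((3*n)! : ℚ)))
      = ((n+j)! : ℚ) * ((2*n-j)! : ℚ) / ((3*n)! : ℚ) := by
    field_simp
  rw [hsimp, inv_eq_one_div, div_eq_div_iff c0 f1]
  linear_combination -hfactQ

end

lemma intChoose3 (n m j : ℕ) (hn : 1 ≤ n) (hj : j ≤ n) (hm : m ≤ 2*n-1) :
    intChoose (3*(n:ℤ)) ((m:ℤ)+j-n) =
      if n-j ≤ m then (((3*n).choose (m-(n-j)) : ℕ) : ℚ) else 0 := by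
  unfold intChoose
  split_ifs with h1 h2 h2
  · obtain ⟨h1a, h1b⟩ := h1
    have ha : (3*(n:ℤ)).toNat = 3*n := by omega
    have hb : ((m:ℤ)+(j:ℤ)-(n:ℤ)).toNat = m-(n-j) := by omega
    rw [ha, hb]
  · exfalso; obtain ⟨h1a, h1b⟩ := h1; omega
  · exfalso; apply h1; constructor <;> omega
  · rfl

lemma intChoose2 (n m j : ℕ) (hn : 1 ≤ n) (hj : j ≤ n) (hm : m ≤ 2*n-1) :
    intChoose ((n:ℤ)+j-1) ((m:ℤ)+j-n) =
      if n-j ≤ m then (((n-1+j).choose (m-(n-j)) : ℕ) : ℚ) else 0 := by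
  unfold intChoose
  split_ifs with h1 h2 h2
  · obtain ⟨h1a, h1b⟩ := h1
    have ha : ((n:ℤ)+(j:ℤ)-1).toNat = n-1+j := by omega
    have hb : ((m:ℤ)+(j:ℤ)-(n:ℤ)).toNat = m-(n-j) := by omega
    rw [ha, hb]
  · exfalso; obtain ⟨h1a, h1b⟩ := h1; omega
  · exfalso; apply h1; constructor <;> omega
  · rfl

theorem binomial_sum_asymmetric (n : ℕ) (hn : 1 ≤ n) (m : ℕ) (hm : m ≤ 2*n - 1) :
    ∑ j ∈ Finset.range (n+1),
        (-1:ℚ)^(n+j) * (n.choose j : ℚ) * intChoose (3*(n:ℤ)) ((m:ℤ)+j-n) /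
          (((3*n).choose (n+j) : ℚ)) =
      ∑ j ∈ Finset.range (n+1),
        (n.choose j : ℚ) * intChoose ((n:ℤ)+j-1) ((m:ℤ)+j-n) /
          (((3*n).choose (n+j) : ℚ)) := by
  have hL : (∑ j ∈ Finset.range (n+1),
        (-1:ℚ)^(n+j) * (n.choose j : ℚ) * intChoose (3*(n:ℤ)) ((m:ℤ)+j-n) /
          (((3*n).choose (n+j) : ℚ)))
      = (3*(n:ℚ)+1) * ((1+xq)^n *
          Fv ((hp n).comp (Polynomial.C (1+xq) * Polynomial.X + Polynomial.C (-xq))) 1).coeff m := by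
    rw [Fv_hpc, Finset.mul_sum, Polynomial.finset_sum_coeff, Finset.mul_sum]
    apply Finset.sum_congr rfl
    intro j hj
    have hj' : j ≤ n := by
      have := Finset.mem_range.mp hj; omega
    have hterm : (1+xq)^n *
        (((n.choose j : R) * (-xq)^(n-j) * (1+xq)^(2*n)) * Polynomial.C (Bq (n+j) (2*n-j)))
        = Polynomial.C (((-1:ℚ))^(n-j) * (n.choose j : ℚ) * Bq (n+j) (2*n-j)) *
            (xq^(n-j) * (1+xq)^(3*n)) := by
      rw [neg_pow]
      rw [show ((-1:R))^(n-j) = Polynomial.C (((-1:ℚ))^(n-j)) by rw [map_pow, map_neg, map_one]]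
      rw [show ((n.choose j : R)) = Polynomial.C ((n.choose j : ℚ)) by simp]
      rw [show (3*n) = n + 2*n by ring, pow_add, map_mul, map_mul]
      ring
    rw [hterm, Polynomial.coeff_C_mul, coeff_pow_aux]
    rw [intChoose3 n m j hn hj' hm, div_eq_mul_inv, Bq_inv n j hj' hn, neg_one_pow_eq n j hj']
    split_ifs with h
    · ring
    · ring
  have hR : (∑ j ∈ Finset.range (n+1),
        (n.choose j : ℚ) * intChoose ((n:ℤ)+j-1) ((m:ℤ)+j-n) /
          (((3*n).choose (n+j) : ℚ)))
      = (3*(n:ℚ)+1) * ((1+xq)^(n-1) * Fv (hp n) 1).coeff m := by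
    rw [Fv_hp, Finset.mul_sum, Polynomial.finset_sum_coeff, Finset.mul_sum]
    apply Finset.sum_congr rfl
    intro j hj
    have hj' : j ≤ n := by
      have := Finset.mem_range.mp hj; omega
    have hterm : (1+xq)^(n-1) *
        (((n.choose j : R) * (1+xq)^j * xq^(n-j)) * Polynomial.C (Bq (n+j) (2*n-j)))
        = Polynomial.C ((n.choose j : ℚ) * Bq (n+j) (2*n-j)) *
            (xq^(n-j) * (1+xq)^(n-1+j)) := by
      rw [show ((n.choose j : R)) = Polynomial.C ((n.choose j : ℚ)) by simp]
      rw [pow_add, map_mul]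
      ring
    rw [hterm, Polynomial.coeff_C_mul, coeff_pow_aux]
    rw [intChoose2 n m j hn hj' hm, div_eq_mul_inv, Bq_inv n j hj' hn]
    split_ifs with h
    · ring
    · ring
  rw [hL, hR]
  congr 1
  obtain ⟨W, hW⟩ := key_div n hn
  have hW' : (1 + Polynomial.X) *
      ((1+xq)^n * Fv ((hp n).comp (Polynomial.C (1+xq) * Polynomial.X + Polynomial.C (-xq))) 1
        - (1+xq)^(n-1) * Fv (hp n) 1) = Polynomial.X^(2*n+1) * W := hW
  have hz := coeff_zero_of_shift _ W _ hW' m (by omega)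
  rw [Polynomial.coeff_sub, sub_eq_zero] at hz
  exact hz
end

section
/- The double series Σ_{j,k ≥ 1} 1/(j·k·(j+k))^s converges for a complex number s if and only if Re(s) > 2/3, and it defines a holomorphic function of s on the half-plane {s : Re(s) > 2/3}. -/
set_option maxHeartbeats 1000000


open Complex

private lemma wz_real_summable_iff (σ : ℝ) :
    Summable (fun p : ℕ × ℕ =>
      ((((p.1+1) * (p.2+1) * ((p.1+1) + (p.2+1)) : ℕ) : ℝ)) ^ (-σ)) ↔ 2/3 < σ := by
  set F : ℕ × ℕ → ℝ := fun p =>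
    ((((p.1+1) * (p.2+1) * ((p.1+1) + (p.2+1)) : ℕ) : ℝ)) ^ (-σ) with hF
  have hNpos : ∀ p : ℕ × ℕ,
      (0:ℝ) < (((p.1+1) * (p.2+1) * ((p.1+1) + (p.2+1)) : ℕ) : ℝ) := by
    intro p; positivity
  have hF0 : ∀ p, 0 ≤ F p := fun p => Real.rpow_nonneg (hNpos p).le _
  constructor
  · intro hsum
    -- first, σ must be positive
    have hσ0 : 0 < σ := by
      by_contra h0
      push_neg at h0
      have h1 : ∀ p : ℕ × ℕ, 1 ≤ F p := by
        intro p
        apply Real.one_le_rpow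
        · exact_mod_cast Nat.one_le_iff_ne_zero.mpr (by positivity)
        · linarith
      have h2 := hsum.tendsto_cofinite_zero
      have h3 : ∀ᶠ p in Filter.cofinite, F p < 1 :=
        h2.eventually (gt_mem_nhds one_pos)
      obtain ⟨p, hp⟩ := h3.exists
      exact absurd (h1 p) (not_le.mpr hp)
    have h2 := ((summable_prod_of_nonneg hF0).mp hsum).2
    -- lower bound on the inner sums
    have key : ∀ j : ℕ, (6:ℝ)^(-σ) * ((j:ℝ)+1)^(1-3*σ) ≤ ∑' k, F (j, k) := by
      intro j
      have hinner : Summable fun k => F (j, k) := hsum.prod_factor j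
      have hterm : ∀ k ∈ Finset.Icc j (2*j),
          ((6*(j+1)^3 : ℕ) : ℝ)^(-σ) ≤ F (j, k) := by
        intro k hk
        simp only [Finset.mem_Icc] at hk
        apply Real.rpow_le_rpow_of_nonpos (hNpos (j,k)) _ (by linarith)
        have : (j+1) * (k+1) * ((j+1) + (k+1)) ≤ 6*(j+1)^3 := by
          calc (j+1) * (k+1) * ((j+1) + (k+1))
              ≤ (j+1) * (2*(j+1)) * (3*(j+1)) :=
                Nat.mul_le_mul (Nat.mul_le_mul_left _ (by omega)) (by omega)
            _ = 6*(j+1)^3 := by ring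
        exact_mod_cast this
      have hcard : (Finset.Icc j (2*j)).card = j + 1 := by
        rw [Nat.card_Icc]; omega
      have hsumle : ((j:ℝ)+1) * ((6*(j+1)^3 : ℕ) : ℝ)^(-σ) ≤ ∑ k ∈ Finset.Icc j (2*j), F (j,k) := by
        have := Finset.card_nsmul_le_sum (Finset.Icc j (2*j)) (fun k => F (j,k))
          (((6*(j+1)^3 : ℕ) : ℝ)^(-σ)) hterm
        rw [hcard, nsmul_eq_mul] at this
        push_cast at this ⊢
        linarith
      have htsum : ∑ k ∈ Finset.Icc j (2*j), F (j,k) ≤ ∑' k, F (j,k) :=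
        Summable.sum_le_tsum _ (fun k _ => hF0 (j,k)) hinner
      refine le_trans (le_of_eq ?_) (hsumle.trans htsum)
      have hj1 : (0:ℝ) < (j:ℝ)+1 := by positivity
      have : ((6*(j+1)^3 : ℕ) : ℝ) = 6 * ((j:ℝ)+1)^(3:ℕ) := by push_cast; ring
      rw [this, Real.mul_rpow (by norm_num) (by positivity),
        ← Real.rpow_natCast ((j:ℝ)+1) 3, ← Real.rpow_mul hj1.le]
      rw [show (1:ℝ)-3*σ = 1 + (3:ℕ)*(-σ) by push_cast; ring,
        Real.rpow_add hj1, Real.rpow_one]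
      ring
    -- conclude
    have h4 : Summable fun j : ℕ => (6:ℝ)^(-σ) * ((j:ℝ)+1)^(1-3*σ) :=
      Summable.of_nonneg_of_le (fun j => by positivity) key h2
    have h5 : Summable fun j : ℕ => ((j:ℝ)+1)^(1-3*σ) :=
      (summable_mul_left_iff (a := (6:ℝ)^(-σ)) (by positivity)).mp h4
    have h6 : Summable fun n : ℕ => ((n:ℝ))^(1-3*σ) := by
      rw [← summable_nat_add_iff 1]
      convert h5 using 2 with n
      · rfl
      push_cast; ring_nf
    have := Real.summable_nat_rpow.mp h6
    linarith
  · intro hσ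
    have hσ0 : 0 < σ := by linarith
    have hf : Summable fun n : ℕ => ((n:ℝ)+1)^(-(3*σ/2)) := by
      have h6 : Summable fun n : ℕ => ((n:ℝ))^(-(3*σ/2)) :=
        Real.summable_nat_rpow.mpr (by linarith)
      have := (summable_nat_add_iff 1).mpr h6
      convert this using 2 with n
      · rfl
      push_cast; ring_nf
    have hprod : Summable fun p : ℕ × ℕ =>
        (((p.1:ℝ)+1)^(-(3*σ/2))) * (((p.2:ℝ)+1)^(-(3*σ/2))) :=
      hf.mul_of_nonneg hf (fun n => Real.rpow_nonneg (by positivity) _)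
        (fun n => Real.rpow_nonneg (by positivity) _)
    apply Summable.of_nonneg_of_le hF0 _ hprod
    intro p
    set a : ℝ := (p.1:ℝ)+1 with ha
    set b : ℝ := (p.2:ℝ)+1 with hb
    have ha1 : (1:ℝ) ≤ a := by simp [ha]
    have hb1 : (1:ℝ) ≤ b := by simp [hb]
    have ha0 : (0:ℝ) < a := by linarith
    have hb0 : (0:ℝ) < b := by linarith
    have hab0 : (0:ℝ) < a*b := by positivity
    have hNcast : (((p.1+1) * (p.2+1) * ((p.1+1) + (p.2+1)) : ℕ) : ℝ) = a*b*(a+b) := by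
      push_cast; ring
    have hsqrt : Real.sqrt (a*b) ≤ a + b := by
      rw [show a + b = Real.sqrt ((a+b)^2) by rw [Real.sqrt_sq (by linarith)]]
      exact Real.sqrt_le_sqrt (by nlinarith)
    have hkey : (a*b)^((3:ℝ)/2) ≤ a*b*(a+b) := by
      rw [show (3:ℝ)/2 = 1 + 1/2 by norm_num, Real.rpow_add hab0, Real.rpow_one,
        ← Real.sqrt_eq_rpow]
      have : 0 ≤ a*b := hab0.le
      nlinarith [Real.sqrt_nonneg (a*b)]
    have step1 : F p ≤ ((a*b)^((3:ℝ)/2))^(-σ) := by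
      have : F p = (a*b*(a+b))^(-σ) := by simp only [hF]; rw [hNcast]
      rw [this]
      exact Real.rpow_le_rpow_of_nonpos (by positivity) hkey (by linarith)
    refine step1.trans (le_of_eq ?_)
    rw [← Real.rpow_mul hab0.le, Real.mul_rpow ha0.le hb0.le,
      show (3:ℝ)/2 * (-σ) = -(3*σ/2) by ring]

private lemma wz_norm_eq (s : ℂ) (p : ℕ × ℕ) :
    ‖1 / ((((p.1+1) * (p.2+1) * ((p.1+1) + (p.2+1)) : ℕ) : ℂ) ^ s)‖ =
      ((((p.1+1) * (p.2+1) * ((p.1+1) + (p.2+1)) : ℕ) : ℝ)) ^ (-s.re) := by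
  have hN : 0 < (p.1+1) * (p.2+1) * ((p.1+1) + (p.2+1)) := by positivity
  rw [norm_div, norm_one, Complex.norm_natCast_cpow_of_pos hN,
    Real.rpow_neg (by positivity), one_div]

theorem witten_zeta_SU3_convergence_and_holomorphy :
    (∀ s : ℂ,
      Summable (fun p : ℕ × ℕ =>
        1 / ((((p.1+1) * (p.2+1) * ((p.1+1) + (p.2+1)) : ℕ) : ℂ) ^ s)) ↔ 2/3 < s.re) ∧
    DifferentiableOn ℂ
      (fun s : ℂ => ∑' p : ℕ × ℕ,
        1 / ((((p.1+1) * (p.2+1) * ((p.1+1) + (p.2+1)) : ℕ) : ℂ) ^ s))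
      {s : ℂ | 2/3 < s.re} := by
  have hbridge : ∀ s : ℂ,
      Summable (fun p : ℕ × ℕ =>
        1 / ((((p.1+1) * (p.2+1) * ((p.1+1) + (p.2+1)) : ℕ) : ℂ) ^ s)) ↔ 2/3 < s.re := by
    intro s
    rw [← summable_norm_iff]
    have : (fun p : ℕ × ℕ =>
        ‖1 / ((((p.1+1) * (p.2+1) * ((p.1+1) + (p.2+1)) : ℕ) : ℂ) ^ s)‖) =
        fun p : ℕ × ℕ =>
          ((((p.1+1) * (p.2+1) * ((p.1+1) + (p.2+1)) : ℕ) : ℝ)) ^ (-s.re) :=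
      funext (wz_norm_eq s)
    rw [this]
    exact wz_real_summable_iff s.re
  refine ⟨hbridge, ?_⟩
  intro s hs
  simp only [Set.mem_setOf_eq] at hs
  set a : ℝ := (2/3 + s.re)/2 with haa
  have ha1 : 2/3 < a := by rw [haa]; linarith
  have ha2 : a < s.re := by rw [haa]; linarith
  have hopen : IsOpen {z : ℂ | a < z.re} := isOpen_lt continuous_const Complex.continuous_re
  have hdiff : DifferentiableOn ℂ
      (fun w : ℂ => ∑' p : ℕ × ℕ,
        1 / ((((p.1+1) * (p.2+1) * ((p.1+1) + (p.2+1)) : ℕ) : ℂ) ^ w))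
      {z : ℂ | a < z.re} := by
    have hNne : ∀ p : ℕ × ℕ,
        ((((p.1+1) * (p.2+1) * ((p.1+1) + (p.2+1)) : ℕ) : ℂ)) ≠ 0 := by
      intro p
      exact Nat.cast_ne_zero.mpr (by positivity)
    refine differentiableOn_tsum_of_summable_norm
      ((wz_real_summable_iff a).mpr ha1) ?_ hopen ?_
    · intro p
      refine ((differentiable_const (1:ℂ)).div
        (differentiable_id.const_cpow (Or.inl (hNne p))) ?_).differentiableOn
      intro z
      rw [Complex.cpow_def_of_ne_zero (hNne p)]
      exact Complex.exp_ne_zero _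
    · intro p w hw
      rw [wz_norm_eq w p]
      apply Real.rpow_le_rpow_of_exponent_le
      · exact_mod_cast Nat.one_le_iff_ne_zero.mpr (by positivity)
      · simp only [Set.mem_setOf_eq] at hw; linarith
  have hmem : s ∈ {z : ℂ | a < z.re} := ha2
  exact (hdiff.differentiableAt (hopen.mem_nhds hmem)).differentiableWithinAt
end

section
/- For every complex s with Re(s) > 2/3, the Mellin transform identity ∫_0^∞ f(t) t^{s-1} dt = 2^s Γ(s) ω(s) holds, where f(t) = Σ_{j,k≥1} exp(-j·k·(j+k)·t/2) for t > 0 and ω(s) = Σ_{j,k≥1} (j·k·(j+k))^{-s}. -/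
open Complex MeasureTheory

/-- `f t = ∑_{j,k ≥ 1} exp(-jk(j+k)t/2)`. -/
noncomputable def su3f (t : ℝ) : ℝ :=
  ∑' p : ℕ × ℕ,
    Real.exp (-(((p.1+1) * (p.2+1) * ((p.1+1) + (p.2+1)) : ℕ) : ℝ) * t / 2)

def su3N (p : ℕ × ℕ) : ℕ := (p.1+1) * (p.2+1) * ((p.1+1) + (p.2+1))

lemma su3N_pos (p : ℕ × ℕ) : 0 < su3N p :=
  Nat.mul_pos (Nat.mul_pos (Nat.succ_pos _) (Nat.succ_pos _)) (by omega)

/-- lower bound `N ≥ (jk)^{3/2}` -/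
lemma su3N_ge (p : ℕ × ℕ) :
    (((p.1+1) * (p.2+1) : ℕ) : ℝ) ^ ((3:ℝ)/2) ≤ (su3N p : ℝ) := by
  have hj : (1:ℝ) ≤ (p.1:ℝ) + 1 := by have := Nat.cast_nonneg (α := ℝ) p.1; linarith
  have hk : (1:ℝ) ≤ (p.2:ℝ) + 1 := by have := Nat.cast_nonneg (α := ℝ) p.2; linarith
  set j : ℝ := (p.1:ℝ) + 1
  set k : ℝ := (p.2:ℝ) + 1
  have hx : (0:ℝ) ≤ j * k := by positivity
  have h1 : (j*k) ^ ((3:ℝ)/2) = (j*k) * Real.sqrt (j*k) := by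
    rw [Real.sqrt_eq_rpow, ← Real.rpow_one_add' hx (by norm_num)]
    norm_num
  have h2 : Real.sqrt (j*k) ≤ j + k := by
    rw [show j + k = Real.sqrt ((j+k)^2) from (Real.sqrt_sq (by positivity)).symm]
    exact Real.sqrt_le_sqrt (by nlinarith)
  have hN : (su3N p : ℝ) = j * k * (j + k) := by
    simp only [su3N, j, k]; push_cast; ring
  have hc : (((p.1+1) * (p.2+1) : ℕ) : ℝ) = j * k := by simp only [j, k]; push_cast; ring
  rw [hN, hc]
  calc (j*k) ^ ((3:ℝ)/2) = (j*k) * Real.sqrt (j*k) := h1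
    _ ≤ j * k * (j + k) := by nlinarith [Real.sqrt_nonneg (j*k)]

lemma su3_summable {σ : ℝ} (hσ : 2/3 < σ) :
    Summable (fun p : ℕ × ℕ => (su3N p : ℝ) ^ (-σ)) := by
  set q : ℝ := 3/2 * σ with hq
  have hq1 : 1 < q := by rw [hq]; linarith
  have hbase : Summable (fun n : ℕ => ((n+1 : ℝ)) ^ (-q)) := by
    have h0 : Summable (fun n : ℕ => ((n : ℝ) ^ q)⁻¹) := Real.summable_nat_rpow_inv.2 hq1
    have := (summable_nat_add_iff 1).2 h0
    refine this.congr fun n => ?_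
    rw [Real.rpow_neg (by positivity)]
    push_cast
    ring_nf
  have hprod : Summable (fun p : ℕ × ℕ => ((p.1+1:ℝ)) ^ (-q) * ((p.2+1:ℝ)) ^ (-q)) :=
    hbase.mul_of_nonneg hbase (fun _ => Real.rpow_nonneg (by positivity) _)
      (fun _ => Real.rpow_nonneg (by positivity) _)
  refine hprod.of_nonneg_of_le (fun p => Real.rpow_nonneg (by positivity) _) fun p => ?_
  have hNpos : (0:ℝ) < (su3N p : ℝ) := by exact_mod_cast su3N_pos p
  have hjk : (0:ℝ) < (((p.1+1) * (p.2+1) : ℕ) : ℝ) := by positivity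
  have h1 : (su3N p : ℝ) ^ (-σ) ≤ ((((p.1+1) * (p.2+1) : ℕ) : ℝ) ^ ((3:ℝ)/2)) ^ (-σ) :=
    Real.rpow_le_rpow_of_nonpos (Real.rpow_pos_of_pos hjk _) (su3N_ge p) (by linarith)
  refine h1.trans_eq ?_
  rw [← Real.rpow_mul hjk.le]
  have hc : (((p.1+1) * (p.2+1) : ℕ) : ℝ) = ((p.1:ℝ)+1) * ((p.2:ℝ)+1) := by push_cast; ring
  rw [hc, Real.mul_rpow (by positivity) (by positivity)]
  norm_num [hq]


lemma aux_integrableOn {s : ℂ} (hs : 0 < s.re) {r : ℝ} (hr : 0 < r) :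
    IntegrableOn (fun t : ℝ => (t : ℂ) ^ (s - 1) * Complex.exp (-(r * t))) (Set.Ioi 0) := by
  have h0 : IntegrableOn (fun x : ℝ => (Real.exp (-x) : ℂ) * (x:ℂ) ^ (s-1)) (Set.Ioi 0) :=
    Complex.GammaIntegral_convergent hs
  have h1 : IntegrableOn
      (fun x : ℝ => (Real.exp (-(r*x)) : ℂ) * ((r*x : ℝ):ℂ) ^ (s-1)) (Set.Ioi 0) := by
    have := (integrableOn_Ioi_comp_mul_left_iff
      (fun x : ℝ => (Real.exp (-x) : ℂ) * ((x:ℝ):ℂ) ^ (s-1)) 0 hr).2 (by simpa using h0)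
    simpa using this
  have hne : ((r:ℂ)) ^ (s-1) ≠ 0 := by
    rw [Complex.cpow_def_of_ne_zero (by exact_mod_cast hr.ne')]
    exact Complex.exp_ne_zero _
  have h2 : IntegrableOn (fun x : ℝ =>
      (((r:ℂ)) ^ (s-1))⁻¹ * ((Real.exp (-(r*x)) : ℂ) * ((r*x : ℝ):ℂ) ^ (s-1)))
      (Set.Ioi 0) := h1.const_mul _
  refine h2.congr_fun (fun x hx => ?_) measurableSet_Ioi
  have hx' : (0:ℝ) < x := hx
  beta_reduce
  rw [Complex.ofReal_mul, mul_cpow_ofReal_nonneg hr.le hx'.le, Complex.ofReal_exp]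
  push_cast
  field_simp

lemma aux_cpow {s : ℂ} {n : ℕ} (hn : 0 < n) :
    (1/((((n:ℝ)/2 : ℝ)):ℂ)) ^ s = (2:ℂ) ^ s * (1/((n:ℂ) ^ s)) := by
  have hn' : (0:ℝ) < (n:ℝ) := by exact_mod_cast hn
  have h1 : (1/((((n:ℝ)/2 : ℝ)):ℂ)) = (((2 * (n:ℝ)⁻¹ : ℝ)):ℂ) := by
    push_cast
    field_simp
  rw [h1, Complex.ofReal_mul, mul_cpow_ofReal_nonneg (by norm_num) (by positivity), Complex.ofReal_inv,
    Complex.ofReal_natCast, Complex.inv_cpow _ _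
      (by rw [Complex.natCast_arg]; exact Real.pi_ne_zero.symm)]
  norm_num

theorem mellin_transform_of_su3f (s : ℂ) (hs : 2/3 < s.re) :
    ∫ t in Set.Ioi (0:ℝ), (su3f t : ℂ) * (t : ℂ) ^ (s - 1) =
      (2 : ℂ) ^ s * Complex.Gamma s *
        ∑' p : ℕ × ℕ,
          1 / ((((p.1+1) * (p.2+1) * ((p.1+1) + (p.2+1)) : ℕ) : ℂ) ^ s) := by
  have hσ : 0 < s.re := by linarith
  have hrpos : ∀ p : ℕ × ℕ, 0 < (su3N p : ℝ) / 2 := fun p => by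
    have := su3N_pos p
    have : (0:ℝ) < (su3N p : ℝ) := by exact_mod_cast this
    linarith
  set F : ℕ × ℕ → ℝ → ℂ := fun p t =>
    (t : ℂ) ^ (s - 1) * Complex.exp (-((((su3N p : ℝ)/2 : ℝ) : ℂ) * (t:ℂ))) with hF
  have hF_int : ∀ p, Integrable (F p) (volume.restrict (Set.Ioi 0)) :=
    fun p => aux_integrableOn hσ (hrpos p)
  have hF_norm : ∀ p, (∫ t in Set.Ioi (0:ℝ), ‖F p t‖) =
      (1/((su3N p : ℝ)/2)) ^ s.re * Real.Gamma s.re := by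
    intro p
    rw [setIntegral_congr_fun (g := fun t : ℝ =>
        t ^ (s.re - 1) * Real.exp (-(((su3N p : ℝ)/2) * t))) measurableSet_Ioi
      (fun t ht => ?_)]
    · exact Real.integral_rpow_mul_exp_neg_mul_Ioi hσ (hrpos p)
    · have ht' : (0:ℝ) < t := ht
      simp only [hF, norm_mul, Complex.norm_cpow_eq_rpow_re_of_pos ht',
        Complex.norm_exp, Complex.sub_re, Complex.one_re]
      congr 1
      simp
  have hF_sum : Summable fun p => ∫ t in Set.Ioi (0:ℝ), ‖F p t‖ := by
    simp only [hF_norm]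
    apply Summable.mul_right
    have h2 : ∀ p : ℕ × ℕ, (1/((su3N p : ℝ)/2)) ^ s.re
        = 2 ^ s.re * (su3N p : ℝ) ^ (-s.re) := by
      intro p
      have hN : (0:ℝ) < (su3N p : ℝ) := by exact_mod_cast su3N_pos p
      rw [one_div_div, div_eq_mul_inv, Real.mul_rpow (by norm_num) (by positivity),
        Real.inv_rpow hN.le, ← Real.rpow_neg hN.le]
    refine ((su3_summable hs).mul_left ((2:ℝ) ^ s.re)).congr fun p => (h2 p).symm
  have key := MeasureTheory.integral_tsum_of_summable_integral_norm hF_int hF_sum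
  have hLHS : ∫ t in Set.Ioi (0:ℝ), (su3f t : ℂ) * (t : ℂ) ^ (s - 1)
      = ∫ t in Set.Ioi (0:ℝ), ∑' p, F p t := by
    refine setIntegral_congr_fun measurableSet_Ioi (fun t ht => ?_)
    rw [su3f, Complex.ofReal_tsum, ← tsum_mul_right]
    refine tsum_congr fun p => ?_
    simp only [hF, su3N]
    rw [Complex.ofReal_exp, mul_comm]
    congr 1
    push_cast
    ring
  rw [hLHS, ← key]
  have hterm : ∀ p : ℕ × ℕ, (∫ t in Set.Ioi (0:ℝ), F p t)
      = (2:ℂ) ^ s * Complex.Gamma s * (1/((su3N p : ℂ) ^ s)) := by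
    intro p
    simp only [hF]
    rw [Complex.integral_cpow_mul_exp_neg_mul_Ioi hσ (hrpos p), aux_cpow (su3N_pos p)]
    ring
  calc ∑' p, ∫ t in Set.Ioi (0:ℝ), F p t
      = ∑' p : ℕ × ℕ, (2:ℂ) ^ s * Complex.Gamma s * (1/((su3N p : ℂ) ^ s)) :=
        tsum_congr hterm
    _ = (2:ℂ) ^ s * Complex.Gamma s * ∑' p : ℕ × ℕ, 1/((su3N p : ℂ) ^ s) := by
        rw [tsum_mul_left]
    _ = _ := rfl
end

section
/- Let f(t) = Σ_{j,k≥1} exp(-j·k·(j+k)·t/2) for t > 0. Then f(t) = O(t^{-2/3}) as t → 0+, i.e., there exist constants C > 0 and t_0 > 0 such that f(t) ≤ C·t^{-2/3} for all 0 < t < t_0. -/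
open Real Finset

lemma geo_summable {c : ℝ} (hc : 0 < c) :
    Summable (fun k : ℕ => Real.exp (-(c * ((k:ℝ)+1)))) := by
  have h : ∀ k : ℕ, Real.exp (-(c * ((k:ℝ)+1))) = Real.exp (-c) * Real.exp (-c) ^ k := by
    intro k
    rw [← Real.exp_nat_mul, ← Real.exp_add]
    ring_nf
  simp only [h]
  exact (summable_geometric_of_lt_one (Real.exp_nonneg _)
    (Real.exp_lt_one_iff.2 (by linarith))).mul_left _

lemma geo_tsum_le {c : ℝ} (hc : 0 < c) :
    ∑' k : ℕ, Real.exp (-(c * ((k:ℝ)+1))) ≤ 1 / c := by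
  have h : ∀ k : ℕ, Real.exp (-(c * ((k:ℝ)+1))) = Real.exp (-c) * Real.exp (-c) ^ k := by
    intro k
    rw [← Real.exp_nat_mul, ← Real.exp_add]
    ring_nf
  have hr0 : (0:ℝ) ≤ Real.exp (-c) := Real.exp_nonneg _
  have hr1 : Real.exp (-c) < 1 := Real.exp_lt_one_iff.2 (by linarith)
  have h1 : 0 < 1 - Real.exp (-c) := by linarith
  rw [tsum_congr h, tsum_mul_left, tsum_geometric_of_lt_one hr0 hr1]
  have hEE : Real.exp c * Real.exp (-c) = 1 := by rw [← Real.exp_add]; simp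
  have h2 : c * Real.exp (-c) ≤ 1 - Real.exp (-c) := by
    nlinarith [Real.add_one_le_exp c, Real.exp_pos (-c), hEE]
  rw [one_div, mul_inv_le_iff₀' h1, ← div_eq_mul_inv, le_div_iff₀ hc]
  linarith [mul_comm c (Real.exp (-c))]

lemma sum_inv_sqrt_le (n : ℕ) :
    ∑ j ∈ Finset.range n, 1 / Real.sqrt ((j:ℝ)+1) ≤ 2 * Real.sqrt n := by
  induction n with
  | zero => simp
  | succ n ih =>
    rw [Finset.sum_range_succ]
    have hs : Real.sqrt ((n:ℝ)+1) > 0 := Real.sqrt_pos.2 (by positivity)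
    have hup : 1 / Real.sqrt ((n:ℝ)+1) ≤ 2 * Real.sqrt ((n:ℝ)+1) - 2 * Real.sqrt n := by
      rw [div_le_iff₀ hs]
      have h1 : Real.sqrt n * Real.sqrt ((n:ℝ)+1) ≤ (n:ℝ) + 1/2 := by
        nlinarith [Real.sq_sqrt (by positivity : (0:ℝ) ≤ (n:ℝ)),
          Real.sq_sqrt (by positivity : (0:ℝ) ≤ (n:ℝ)+1),
          Real.sqrt_nonneg (n:ℝ), Real.sqrt_nonneg ((n:ℝ)+1),
          sq_nonneg (Real.sqrt n * Real.sqrt ((n:ℝ)+1) - ((n:ℝ) + 1/2))]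
      nlinarith [Real.sq_sqrt (by positivity : (0:ℝ) ≤ (n:ℝ)+1)]
    push_cast
    linarith

lemma telescope_hasSum (T : ℕ) (hT : 1 ≤ T) :
    HasSum (fun j : ℕ => 1 / (((j:ℝ)+T) * ((j:ℝ)+T+1))) (1/(T:ℝ)) := by
  have hpos : ∀ j : ℕ, (0:ℝ) < (j:ℝ)+T := fun j => by
    have : (1:ℝ) ≤ (T:ℝ) := by exact_mod_cast hT
    linarith [Nat.cast_nonneg (α := ℝ) j]
  rw [hasSum_iff_tendsto_nat_of_nonneg]
  · have key : ∀ n : ℕ, ∑ j ∈ Finset.range n, 1 / (((j:ℝ)+T) * ((j:ℝ)+T+1))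
        = 1/(T:ℝ) - 1/((n:ℝ)+T) := by
      intro n
      have := Finset.sum_range_sub' (fun j : ℕ => 1/((j:ℝ)+T)) n
      push_cast at this
      rw [show (1:ℝ)/(T:ℝ) - 1/((n:ℝ)+T) = 1/(0+(T:ℝ)) - 1/((n:ℝ)+T) by norm_num, ← this]
      apply Finset.sum_congr rfl
      intro j _
      have h1 := hpos j
      have h2 : (0:ℝ) < (j:ℝ)+T+1 := by linarith
      rw [div_sub_div _ _ (ne_of_gt h1) (by push_cast; linarith : ((j:ℝ)+1+T) ≠ 0)]
      push_cast
      ring_nf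
    simp only [key]
    have h0 : Filter.Tendsto (fun n : ℕ => 1/((n:ℝ)+T)) Filter.atTop (nhds 0) := by
      simp only [one_div]
      exact Filter.Tendsto.comp tendsto_inv_atTop_zero
        (Filter.tendsto_atTop_add_const_right _ (T:ℝ) tendsto_natCast_atTop_atTop)
    have := Filter.Tendsto.sub (tendsto_const_nhds (x := 1/(T:ℝ)) (f := Filter.atTop (α := ℕ))) h0
    simpa using this
  · intro j
    positivity

lemma sq_summable {b : ℝ} (hb : 0 < b) :
    Summable (fun k : ℕ => Real.exp (-(b * ((k:ℝ)+1)^2))) := by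
  apply Summable.of_nonneg_of_le (fun k => (Real.exp_pos _).le)
    (fun k => ?_) (geo_summable hb)
  apply Real.exp_le_exp.2
  have hk : (0:ℝ) ≤ b * ((k:ℝ)+1) * (k:ℝ) := by positivity
  nlinarith [hk]

lemma sq_tsum_le {b : ℝ} (hb : 0 < b) :
    ∑' k : ℕ, Real.exp (-(b * ((k:ℝ)+1)^2)) ≤ 1 + 2 / Real.sqrt b := by
  set s := Real.sqrt b with hs
  have hs0 : 0 < s := Real.sqrt_pos.2 hb
  have hss : s * s = b := Real.mul_self_sqrt hb.le
  set m := ⌈1/s⌉₊ with hm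
  have hminv : 1/s ≤ (m:ℝ) := Nat.le_ceil _
  have hmlt : (m:ℝ) < 1/s + 1 := Nat.ceil_lt_add_one (by positivity)
  have hsum := sq_summable hb
  clear_value s m
  rw [← Summable.sum_add_tsum_nat_add m hsum]
  have hpart1 : ∑ k ∈ Finset.range m, Real.exp (-(b * ((k:ℝ)+1)^2)) ≤ (m:ℝ) := by
    calc ∑ k ∈ Finset.range m, Real.exp (-(b * ((k:ℝ)+1)^2))
        ≤ ∑ k ∈ Finset.range m, 1 := by
          apply Finset.sum_le_sum
          intro k _
          apply Real.exp_le_one_iff.2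
          have : (0:ℝ) ≤ b * ((k:ℝ)+1)^2 := by positivity
          linarith
    _ = (m:ℝ) := by simp
  have hpart2 : ∑' k : ℕ, Real.exp (-(b * (((k+m:ℕ):ℝ)+1)^2)) ≤ 1/s := by
    have hle : ∀ k : ℕ, Real.exp (-(b * (((k+m:ℕ):ℝ)+1)^2)) ≤ Real.exp (-(s * ((k:ℝ)+1))) := by
      intro k
      apply Real.exp_le_exp.2
      rw [neg_le_neg_iff]
      push_cast
      have h1 : 1/s ≤ (k:ℝ) + (m:ℝ) + 1 := by linarith [Nat.cast_nonneg (α := ℝ) k]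
      have h4 : 1 ≤ s * ((k:ℝ) + (m:ℝ) + 1) := by
        rw [div_le_iff₀ hs0] at h1
        nlinarith
      have hK0 : (0:ℝ) ≤ (k:ℝ) + (m:ℝ) + 1 := by positivity
      have hK1 : (k:ℝ)+1 ≤ (k:ℝ)+(m:ℝ)+1 := by
        have : (0:ℝ) ≤ (m:ℝ) := Nat.cast_nonneg m
        linarith
      calc s * ((k:ℝ)+1) ≤ s * ((k:ℝ)+(m:ℝ)+1) := by
            exact mul_le_mul_of_nonneg_left hK1 hs0.le
        _ = s * ((k:ℝ)+(m:ℝ)+1) * 1 := by ring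
        _ ≤ s * ((k:ℝ)+(m:ℝ)+1) * (s * ((k:ℝ)+(m:ℝ)+1)) := by
            exact mul_le_mul_of_nonneg_left h4 (by positivity)
        _ = b * ((k:ℝ)+(m:ℝ)+1)^2 := by rw [← hss]; ring
    have hsum2 : Summable (fun k : ℕ => Real.exp (-(b * (((k+m:ℕ):ℝ)+1)^2))) :=
      (summable_nat_add_iff m).2 hsum
    exact le_trans (Summable.tsum_le_tsum hle hsum2 (geo_summable hs0)) (geo_tsum_le hs0)
  have : (m:ℝ) ≤ 1/s + 1 := hmlt.le
  have h2s : 1 + 2/s = (1/s + 1) + 1/s := by ring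
  rw [h2s]
  exact add_le_add (le_trans hpart1 this) hpart2

noncomputable def Gd (t : ℝ) (p : ℕ × ℕ) : ℝ :=
  Real.exp (-(((p.1+1) * (p.2+1) * ((p.1+1) + (p.2+1)) : ℕ) : ℝ) * t / 2)

lemma su3f_eq (t : ℝ) : su3f t = ∑' p : ℕ × ℕ, Gd t p := rfl

lemma Gd_val (t : ℝ) (j k : ℕ) : Gd t (j, k) =
    Real.exp (-((((j:ℝ)+1)^2*(t/2)) * ((k:ℝ)+1) + (((j:ℝ)+1)*(t/2)) * ((k:ℝ)+1)^2)) := by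
  unfold Gd
  congr 1
  push_cast
  ring

set_option maxHeartbeats 2000000 in
theorem su3f_bigO_at_zero :
    ∃ C > (0:ℝ), ∃ t₀ > (0:ℝ), ∀ t : ℝ, 0 < t → t < t₀ →
      su3f t ≤ C * t ^ (-(2:ℝ)/3) := by
  refine ⟨12, by norm_num, 1, by norm_num, ?_⟩
  intro t ht ht1
  set a : ℝ := t/2 with ha
  have ha0 : 0 < a := by positivity
  set u : ℝ := t ^ (-(1:ℝ)/3) with hu
  have hu0 : 0 < u := Real.rpow_pos_of_pos ht _
  have hu3t : u^3 * t = 1 := by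
    rw [hu, ← Real.rpow_natCast (t ^ (-(1:ℝ)/3)) 3, ← Real.rpow_mul ht.le]
    norm_num
    rw [Real.rpow_neg_one]
    field_simp
  have hu1 : 1 ≤ u := by
    by_contra h
    push_neg at h
    have h3 : u^3 < 1 := pow_lt_one₀ hu0.le h (by norm_num)
    have : u^3 * t < t := by nlinarith
    linarith
  have htgt : t ^ (-(2:ℝ)/3) = u^2 := by
    rw [hu, ← Real.rpow_natCast (t ^ (-(1:ℝ)/3)) 2, ← Real.rpow_mul ht.le]
    norm_num
  clear_value a u
  -- the term as a function
  have hGval : ∀ j k : ℕ, Gd t (j, k) =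
      Real.exp (-((((j:ℝ)+1)^2*a) * ((k:ℝ)+1) + (((j:ℝ)+1)*a) * ((k:ℝ)+1)^2)) := by
    intro j k
    rw [Gd_val, ha]
  have hGpos : ∀ p : ℕ × ℕ, 0 < Gd t p := fun p => Real.exp_pos _
  have hone : ∀ j : ℕ, (1:ℝ) ≤ (j:ℝ)+1 := fun j => by
    linarith [Nat.cast_nonneg (α := ℝ) j]
  -- 2D summability
  have hGsum : Summable (Gd t) := by
    apply Summable.of_nonneg_of_le (fun p => (hGpos p).le)
      (fun p => ?_) ((geo_summable ha0).mul_of_nonneg (geo_summable ha0)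
        (fun k => (Real.exp_pos _).le) (fun k => (Real.exp_pos _).le))
    obtain ⟨j, k⟩ := p
    rw [hGval j k, ← Real.exp_add]
    apply Real.exp_le_exp.2
    have hJ := hone j
    have hK := hone k
    have hJK : (0:ℝ) ≤ ((j:ℝ)+1)*((k:ℝ)+1) - 1 := by nlinarith
    have e1 : a * ((j:ℝ)+1) ≤ (((j:ℝ)+1)^2*a) * ((k:ℝ)+1) := by
      nlinarith [mul_nonneg (mul_nonneg ha0.le (by linarith : (0:ℝ) ≤ (j:ℝ)+1)) hJK]
    have e2 : a * ((k:ℝ)+1) ≤ (((j:ℝ)+1)*a) * ((k:ℝ)+1)^2 := by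
      nlinarith [mul_nonneg (mul_nonneg ha0.le (by linarith : (0:ℝ) ≤ (k:ℝ)+1)) hJK]
    linarith
  -- inner sums
  set S : ℕ → ℝ := fun j => ∑' k : ℕ, Gd t (j, k) with hS
  have hSsum_inner : ∀ j : ℕ, Summable (fun k : ℕ => Gd t (j, k)) := fun j =>
    hGsum.prod_factor j
  have hStot : su3f t = ∑' j : ℕ, S j := by rw [su3f_eq]; exact Summable.tsum_prod hGsum
  have hSnonneg : ∀ j : ℕ, 0 ≤ S j := fun j =>
    tsum_nonneg (fun k => (hGpos _).le)
  -- bound A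
  have hA : ∀ j : ℕ, S j ≤ 1 / (((j:ℝ)+1)^2 * a) := by
    intro j
    have hc : 0 < ((j:ℝ)+1)^2 * a := by positivity
    refine le_trans (Summable.tsum_le_tsum (fun k => ?_) (hSsum_inner j) (geo_summable hc))
      (geo_tsum_le hc)
    rw [hGval j k]
    apply Real.exp_le_exp.2
    have : 0 ≤ (((j:ℝ)+1)*a) * ((k:ℝ)+1)^2 := by positivity
    linarith
  -- bound B
  have hB : ∀ j : ℕ, S j ≤ 1 + 2 / Real.sqrt (((j:ℝ)+1) * a) := by
    intro j
    have hb : 0 < ((j:ℝ)+1) * a := by positivity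
    refine le_trans (Summable.tsum_le_tsum (fun k => ?_) (hSsum_inner j) (sq_summable hb))
      (sq_tsum_le hb)
    rw [hGval j k]
    apply Real.exp_le_exp.2
    have : 0 ≤ (((j:ℝ)+1)^2*a) * ((k:ℝ)+1) := by positivity
    linarith
  -- summability of S
  have hSsum : Summable S := by
    have hbase : Summable (fun j : ℕ => 1 / ((j:ℝ)+1)^2) := by
      have h1 : Summable (fun j : ℕ => 1 / ((j:ℝ))^2) :=
        Real.summable_one_div_nat_pow.2 one_lt_two
      have h2 := (summable_nat_add_iff 1).2 h1
      apply h2.congr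
      intro j
      push_cast
      ring
    have hbig : Summable (fun j : ℕ => 1 / (((j:ℝ)+1)^2 * a)) := by
      apply (hbase.mul_left (1/a)).congr
      intro j
      field_simp
    exact Summable.of_nonneg_of_le hSnonneg hA hbig
  clear_value S
  -- threshold
  set T : ℕ := ⌈u⌉₊ with hT
  have hT1 : 1 ≤ T := Nat.one_le_ceil_iff.2 hu0
  have hTu : u ≤ (T:ℝ) := Nat.le_ceil u
  have hT2u : (T:ℝ) ≤ 2*u := by
    have := Nat.ceil_lt_add_one hu0.le
    rw [← hT] at this
    linarith
  have hTpos : (0:ℝ) < (T:ℝ) := lt_of_lt_of_le hu0 hTu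
  clear_value T
  -- split
  have hsplit : su3f t = ∑ j ∈ Finset.range T, S j + ∑' j : ℕ, S (j + T) := by
    rw [hStot, ← Summable.sum_add_tsum_nat_add T hSsum]
  -- range part
  have hrange : ∑ j ∈ Finset.range T, S j
      ≤ (T:ℝ) + (2 / Real.sqrt a) * (2 * Real.sqrt (T:ℝ)) := by
    have step : ∀ j : ℕ, S j ≤ 1 + (2 / Real.sqrt a) * (1 / Real.sqrt ((j:ℝ)+1)) := by
      intro j
      refine le_trans (hB j) ?_
      have h1 : Real.sqrt (((j:ℝ)+1) * a) = Real.sqrt ((j:ℝ)+1) * Real.sqrt a :=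
        Real.sqrt_mul (by positivity) a
      have hsj : 0 < Real.sqrt ((j:ℝ)+1) := Real.sqrt_pos.2 (by positivity)
      have hsa : 0 < Real.sqrt a := Real.sqrt_pos.2 ha0
      rw [h1]
      have : 2 / (Real.sqrt ((j:ℝ)+1) * Real.sqrt a)
          = (2 / Real.sqrt a) * (1 / Real.sqrt ((j:ℝ)+1)) := by
        field_simp
      rw [this]
    calc ∑ j ∈ Finset.range T, S j
        ≤ ∑ j ∈ Finset.range T, (1 + (2 / Real.sqrt a) * (1 / Real.sqrt ((j:ℝ)+1))) :=
          Finset.sum_le_sum (fun j _ => step j)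
      _ = (T:ℝ) + (2 / Real.sqrt a) * ∑ j ∈ Finset.range T, 1 / Real.sqrt ((j:ℝ)+1) := by
          rw [Finset.sum_add_distrib, Finset.sum_const, Finset.card_range, ← Finset.mul_sum]
          simp
      _ ≤ (T:ℝ) + (2 / Real.sqrt a) * (2 * Real.sqrt (T:ℝ)) := by
          have := sum_inv_sqrt_le T
          have h2 : 0 ≤ 2 / Real.sqrt a := by positivity
          nlinarith
  -- tail part
  have htail : ∑' j : ℕ, S (j + T) ≤ (1/a) * (1/(T:ℝ)) := by
    have hts := telescope_hasSum T hT1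
    have hbig : Summable (fun j : ℕ => (1/a) * (1 / (((j:ℝ)+T) * ((j:ℝ)+T+1)))) :=
      hts.summable.mul_left _
    have hstep : ∀ j : ℕ, S (j + T) ≤ (1/a) * (1 / (((j:ℝ)+T) * ((j:ℝ)+T+1))) := by
      intro j
      refine le_trans (hA (j + T)) ?_
      have hjT : (0:ℝ) < (j:ℝ)+T := by positivity
      have hden1 : (0:ℝ) < ((j:ℝ)+T) * ((j:ℝ)+T+1) := by nlinarith
      have hcast : (((j + T : ℕ):ℝ)+1) = (j:ℝ)+T+1 := by push_cast; ring
      rw [hcast, show (1/a) * (1/(((j:ℝ)+T)*((j:ℝ)+T+1)))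
          = 1/(a*(((j:ℝ)+T)*((j:ℝ)+T+1))) by rw [div_mul_div_comm, one_mul]]
      apply one_div_le_one_div_of_le (by positivity)
      nlinarith [ha0]
    calc ∑' j : ℕ, S (j + T)
        ≤ ∑' j : ℕ, (1/a) * (1 / (((j:ℝ)+T) * ((j:ℝ)+T+1))) :=
          Summable.tsum_le_tsum hstep ((summable_nat_add_iff T).2 hSsum) hbig
      _ = (1/a) * (1/(T:ℝ)) := by rw [tsum_mul_left, hts.tsum_eq]
  -- numeric assembly
  have huu4t : u^4 * t = u := by
    calc u^4 * t = u * (u^3 * t) := by ring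
      _ = u := by rw [hu3t]; ring
  have hmid : (2 / Real.sqrt a) * (2 * Real.sqrt (T:ℝ)) ≤ 8 * u^2 := by
    have key : (T:ℝ)/a ≤ 4*u^4 := by
      rw [div_le_iff₀ ha0, ha]
      nlinarith [hT2u, huu4t, hu0]
    have e1 : (2 / Real.sqrt a) * (2 * Real.sqrt (T:ℝ)) = 4 * Real.sqrt ((T:ℝ)/a) := by
      rw [Real.sqrt_div (Nat.cast_nonneg T)]
      have hsa : 0 < Real.sqrt a := Real.sqrt_pos.2 ha0
      field_simp
      ring
    have e2 : Real.sqrt ((T:ℝ)/a) ≤ Real.sqrt (4*u^4) := Real.sqrt_le_sqrt key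
    have e3 : Real.sqrt (4*u^4) = 2*u^2 := by
      rw [show 4*u^4 = (2*u^2)^2 by ring]
      exact Real.sqrt_sq (by positivity)
    rw [e1]
    rw [e3] at e2
    linarith
  have hhead : (T:ℝ) ≤ 2*u^2 := by nlinarith [hT2u, hu1, hu0]
  have htl : (1/a) * (1/(T:ℝ)) ≤ 2*u^2 := by
    have h1 : (1/(T:ℝ)) ≤ 1/u := by
      apply one_div_le_one_div_of_le hu0 hTu
    have h2 : (1/a) * (1/u) = 2*u^2 := by
      rw [ha]
      field_simp
      linarith [hu3t]
    calc (1/a) * (1/(T:ℝ)) ≤ (1/a) * (1/u) :=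
          mul_le_mul_of_nonneg_left h1 (by positivity)
      _ = 2*u^2 := h2
  rw [htgt, hsplit]
  linarith
end

section
/- There exists a constant C > 0 such that for all t > 0 and all real u, |log((1-e^{-t})/(1-e^{-t+iu})) - i·(e^{-t}/(1-e^{-t}))·u + (1/2)·(e^{-t}/(1-e^{-t})^2)·u^2| ≤ C·e^{-t}·|u|^3/(1-e^{-t})^3. -/
open Complex

lemma key_exp_bound (x : ℝ) :
    ‖Complex.exp (x * I) - 1 - x * I - (x * I) ^ 2 / 2‖ ≤ 4 * |x| ^ 3 := by
  rcases le_or_gt (|x|) 1 with h | h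
  · have hx : ‖(x:ℂ) * I‖ ≤ 1 := by
      simpa using h
    have hb := Complex.exp_bound hx (n := 3) (by norm_num)
    have hsum : ∑ i ∈ Finset.range 3, ((x:ℂ) * I) ^ i / i.factorial
        = 1 + x * I + (x * I) ^ 2 / 2 := by
      simp [Finset.sum_range_succ]
    rw [hsum] at hb
    have habs : ‖(x:ℂ) * I‖ = |x| := by simp
    rw [habs] at hb
    have : ‖Complex.exp (x * I) - 1 - x * I - (x * I) ^ 2 / 2‖
        = ‖Complex.exp (x * I) - (1 + x * I + (x * I) ^ 2 / 2)‖ := by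
      ring_nf
    rw [this]
    have h3 : (0:ℝ) ≤ |x| ^ 3 := by positivity
    calc ‖Complex.exp (x * I) - (1 + x * I + (x * I) ^ 2 / 2)‖
        ≤ |x| ^ 3 * ((3+1 : ℕ) * ((3).factorial * 3 : ℝ)⁻¹) := hb
      _ ≤ 4 * |x| ^ 3 := by norm_num [Nat.factorial]; nlinarith
  · have h1 : ‖Complex.exp ((x:ℂ) * I)‖ = 1 := by
      simp [Complex.norm_exp]
    have h2 : ‖(x:ℂ) * I‖ = |x| := by simp
    have h3 : ‖((x:ℂ) * I) ^ 2 / 2‖ = x ^ 2 / 2 := by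
      rw [norm_div, norm_pow, h2]
      simp [_root_.sq_abs]
    calc ‖Complex.exp (x * I) - 1 - x * I - (x * I) ^ 2 / 2‖
        ≤ ‖Complex.exp ((x:ℂ) * I) - 1 - x * I‖ + ‖((x:ℂ) * I) ^ 2 / 2‖ := norm_sub_le _ _
      _ ≤ (‖Complex.exp ((x:ℂ) * I) - 1‖ + ‖(x:ℂ) * I‖) + ‖((x:ℂ) * I) ^ 2 / 2‖ := by
          gcongr; exact norm_sub_le _ _
      _ ≤ ((‖Complex.exp ((x:ℂ) * I)‖ + ‖(1:ℂ)‖) + ‖(x:ℂ) * I‖) + ‖((x:ℂ) * I) ^ 2 / 2‖ := by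
          gcongr; exact norm_sub_le _ _
      _ = 2 + |x| + x ^ 2 / 2 := by rw [h1, h2, h3]; norm_num
      _ ≤ 4 * |x| ^ 3 := by nlinarith [_root_.sq_abs x, abs_nonneg x]

theorem geometric_log_charfun_taylor_bound :
    ∃ C > (0:ℝ), ∀ t : ℝ, 0 < t → ∀ u : ℝ,
      ‖Complex.log ((1 - Complex.exp (-(t:ℂ))) / (1 - Complex.exp (-(t:ℂ) + Complex.I * (u:ℂ))))
          - Complex.I * ((Real.exp (-t) / (1 - Real.exp (-t)) : ℝ) : ℂ) * (u:ℂ)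
          + (1/2) * ((Real.exp (-t) / (1 - Real.exp (-t))^2 : ℝ) : ℂ) * (u:ℂ)^2‖ ≤
        C * Real.exp (-t) * |u|^3 / (1 - Real.exp (-t))^3 := by
  refine ⟨8, by norm_num, fun t ht u => ?_⟩
  set q : ℝ := Real.exp (-t) with hqdef
  have hq0 : 0 < q := Real.exp_pos _
  have hq1 : q < 1 := by
    rw [hqdef, Real.exp_lt_one_iff]; linarith
  have h1q : (0:ℝ) < 1 - q := by linarith
  set w : ℂ := (q:ℂ) * Complex.exp ((u:ℂ) * I) with hwdef
  have hqc : Complex.exp (-(t:ℂ)) = (q:ℂ) := by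
    rw [hqdef, Complex.ofReal_exp, Complex.ofReal_neg]
  have hw_eq : Complex.exp (-(t:ℂ) + Complex.I * u) = w := by
    rw [Complex.exp_add, hqc, hwdef, mul_comm Complex.I (u:ℂ)]
  have hnw : ‖w‖ < 1 := by
    rw [hwdef]
    simp only [norm_mul, Complex.norm_exp]
    simp [abs_of_pos hq0, hq1]
  have hnq : ‖(q:ℂ)‖ < 1 := by
    rw [Complex.norm_real, Real.norm_eq_abs, abs_of_pos hq0]; exact hq1
  have hnqr : ‖q‖ < 1 := by rw [Real.norm_eq_abs, abs_of_pos hq0]; exact hq1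
  have h1w0 : (1 : ℂ) - w ≠ 0 := by
    intro h
    have : ‖(1:ℂ)‖ = ‖w‖ := by rw [sub_eq_zero] at h; rw [h]
    simp at this
    rw [this] at hnw; exact lt_irrefl _ hnw
  have h1qc : (1 : ℂ) - (q:ℂ) ≠ 0 := by
    intro h
    rw [sub_eq_zero] at h
    have := congrArg Complex.re h
    simp at this
    linarith
  have harg : (1 - w).arg ≠ Real.pi := by
    intro h
    rw [Complex.arg_eq_pi_iff] at h
    have hre : (1 - w).re = 1 - q * Real.cos u := by
      rw [hwdef]
      simp [Complex.exp_re]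
    have hcos : q * Real.cos u ≤ q := by
      nlinarith [Real.cos_le_one u]
    rw [hre] at h
    linarith [h.1]
  have hlog : Complex.log ((1 - (q:ℂ)) / (1 - w))
      = ((Real.log (1 - q) : ℝ) : ℂ) - Complex.log (1 - w) := by
    rw [div_eq_mul_inv]
    have : ((1:ℂ) - (q:ℂ)) = (((1 - q : ℝ)):ℂ) := by push_cast; ring
    rw [this, Complex.log_ofReal_mul h1q (inv_ne_zero h1w0), Complex.log_inv _ harg]
    ring
  set bfun : ℕ → ℂ := fun n =>
      ((w ^ n / n - (q:ℂ) ^ n / n) - (I * u) * (q:ℂ) ^ n)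
        + ((u:ℂ) ^ 2 / 2) * (n * (q:ℂ) ^ n) + (if n = 0 then I * (u:ℂ) else 0) with hbdef
  have S1 : HasSum (fun n : ℕ => w ^ n / n) (-Complex.log (1 - w)) :=
    Complex.hasSum_taylorSeries_neg_log hnw
  have S2 : HasSum (fun n : ℕ => (q:ℂ) ^ n / n) (-Complex.log (1 - (q:ℂ))) :=
    Complex.hasSum_taylorSeries_neg_log hnq
  have S3 : HasSum (fun n : ℕ => (I * (u:ℂ)) * (q:ℂ) ^ n) ((I * u) * ((1:ℂ) - q)⁻¹) :=
    (hasSum_geometric_of_norm_lt_one hnq).mul_left _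
  have S4 : HasSum (fun n : ℕ => ((u:ℂ) ^ 2 / 2) * ((n : ℂ) * (q:ℂ) ^ n))
      (((u:ℂ) ^ 2 / 2) * ((q:ℂ) / (1 - q) ^ 2)) :=
    (hasSum_coe_mul_geometric_of_norm_lt_one hnq).mul_left _
  have S5 : HasSum (fun n : ℕ => if n = 0 then I * (u:ℂ) else 0) (I * (u:ℂ)) :=
    hasSum_ite_eq 0 _
  have HT : HasSum bfun
      ((((-Complex.log (1 - w)) - (-Complex.log (1 - (q:ℂ))) - (I * u) * ((1:ℂ) - q)⁻¹)
        + ((u:ℂ) ^ 2 / 2) * ((q:ℂ) / (1 - q) ^ 2)) + I * (u:ℂ)) :=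
    (((S1.sub S2).sub S3).add S4).add S5
  have hE : Complex.log ((1 - Complex.exp (-(t:ℂ))) / (1 - Complex.exp (-(t:ℂ) + Complex.I * (u:ℂ))))
          - Complex.I * ((q / (1 - q) : ℝ) : ℂ) * (u:ℂ)
          + (1/2) * ((q / (1 - q)^2 : ℝ) : ℂ) * (u:ℂ)^2
      = (((-Complex.log (1 - w)) - (-Complex.log (1 - (q:ℂ))) - (I * u) * ((1:ℂ) - q)⁻¹)
        + ((u:ℂ) ^ 2 / 2) * ((q:ℂ) / (1 - q) ^ 2)) + I * (u:ℂ) := by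
    rw [hqc, hw_eq, hlog]
    have hlq : Complex.log (1 - (q:ℂ)) = ((Real.log (1 - q) : ℝ) : ℂ) := by
      rw [show ((1:ℂ) - (q:ℂ)) = (((1 - q : ℝ)):ℂ) by push_cast; ring,
        ← Complex.ofReal_log h1q.le]
    rw [hlq]
    push_cast
    field_simp
    ring
  rw [hE, ← HT.tsum_eq]
  have hb0 : bfun 0 = 0 := by simp [hbdef]
  have H1 : HasSum (fun n => bfun (n + 1)) (∑' n, bfun n) := by
    have h := (hasSum_nat_add_iff' (f := bfun) 1).mpr HT
    simpa [hb0, HT.tsum_eq] using h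
  set gfun : ℕ → ℝ := fun n => (8 * |u| ^ 3 * q) * ((((n+2).choose 2 : ℕ) : ℝ) * q ^ n)
    with hgdef
  have HG : HasSum gfun ((8 * |u| ^ 3 * q) * (1 / (1 - q) ^ 3)) :=
    (hasSum_choose_mul_geometric_of_norm_lt_one 2 hnqr).mul_left _
  have hterm : ∀ n : ℕ, ‖bfun (n + 1)‖ ≤ gfun n := by
    intro n
    have hmc : (((n+1 : ℕ)):ℂ) ≠ 0 := Nat.cast_ne_zero.mpr (Nat.succ_ne_zero n)
    have hb : bfun (n+1) = ((q:ℂ) ^ (n+1) / ((n+1 : ℕ) : ℂ)) *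
        (Complex.exp ((((n+1 : ℕ) * u : ℝ) : ℂ) * I) - 1 - (((n+1:ℕ) * u : ℝ) : ℂ) * I
          - ((((n+1:ℕ) * u : ℝ) : ℂ) * I) ^ 2 / 2) := by
      simp only [hbdef, hwdef, Nat.succ_ne_zero, if_false]
      rw [mul_pow, ← Complex.exp_nat_mul]
      push_cast
      rw [show ((n:ℂ)+1) * ((u:ℂ) * I) = (((n:ℂ)+1) * (u:ℂ)) * I by ring]
      have h1 : ((n:ℂ) + 1) ≠ 0 := by exact_mod_cast hmc
      field_simp [h1]
      simp only [mul_pow, Complex.I_sq]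
      ring
    have hn1 : (0:ℝ) < (n:ℝ) + 1 := by positivity
    have hqm : ‖(q:ℂ) ^ (n+1) / ((n+1:ℕ):ℂ)‖ = q ^ (n+1) / ((n:ℝ)+1) := by
      rw [norm_div, norm_pow, show ((n+1:ℕ):ℂ) = ((((n:ℝ)+1) : ℝ):ℂ) by push_cast; ring]
      rw [Complex.norm_real, Complex.norm_real, Real.norm_eq_abs, Real.norm_eq_abs,
        abs_of_pos hq0, abs_of_pos hn1]
    have hch : (((n+2).choose 2 : ℕ) : ℝ) = ((n:ℝ)+1) * ((n:ℝ)+2) / 2 := by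
      rw [Nat.cast_choose_two]; push_cast; ring
    calc ‖bfun (n+1)‖
        = ‖(q:ℂ)^(n+1)/((n+1:ℕ):ℂ)‖ * ‖Complex.exp ((((n+1 : ℕ) * u : ℝ) : ℂ) * I)
            - 1 - (((n+1:ℕ) * u : ℝ) : ℂ) * I - ((((n+1:ℕ) * u : ℝ) : ℂ) * I) ^ 2 / 2‖ := by
          rw [hb, norm_mul]
      _ ≤ (q^(n+1)/((n:ℝ)+1)) * (4 * |((n+1:ℕ):ℝ) * u| ^ 3) := by
          rw [hqm]
          gcongr
          exact key_exp_bound _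
      _ = 4 * |u|^3 * q^(n+1) * ((n:ℝ)+1)^2 := by
          rw [abs_mul, Nat.abs_cast]
          push_cast
          field_simp
      _ ≤ gfun n := by
          rw [hgdef]
          simp only [hch]
          rw [show q^(n+1) = q^n * q from pow_succ q n]
          have h1 : (0:ℝ) ≤ q^n := by positivity
          have h2 : (0:ℝ) ≤ |u|^3 := by positivity
          have hkey : 8*|u|^3*q*((((n:ℝ)+1)*((n:ℝ)+2)/2)*q^n) - 4*|u|^3*(q^n*q)*((n:ℝ)+1)^2
              = 4*(|u|^3*q*q^n*((n:ℝ)+1)) := by ring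
          have h1 : (0:ℝ) ≤ q^n := by positivity
          have h2 : (0:ℝ) ≤ |u|^3 := by positivity
          nlinarith [mul_nonneg (mul_nonneg (mul_nonneg h2 hq0.le) h1) hn1.le]
  have hsn : Summable (fun n => ‖bfun (n+1)‖) :=
    Summable.of_nonneg_of_le (fun n => norm_nonneg _) hterm HG.summable
  rw [← H1.tsum_eq]
  calc ‖∑' n, bfun (n+1)‖ ≤ ∑' n, ‖bfun (n+1)‖ := norm_tsum_le_tsum_norm hsn
    _ ≤ ∑' n, gfun n := Summable.tsum_le_tsum hterm hsn HG.summable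
    _ = (8 * |u|^3 * q) * (1/(1-q)^3) := HG.tsum_eq
    _ = 8 * q * |u|^3 / (1-q)^3 := by ring
end
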